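/- arXiv:2401.04899 — 2 statements merged into one kernel-verified Lean document; each statement's English description precedes it below -/
import Mathlib

section
/- Let Ω ⊂ ℍ_s^n be real-path-connected, let I ∈ 𝕊, and let z ∈ ℂ^n be such that Ψ_i^I(z) ∈ Ω. Then there exists a path γ ∈ 𝒫(ℂ^n, Ω) such that γ^I([0,1]) ⊂ Ω and γ^I(1) = Ψ_i^I(z). -/
open scoped Quaternion
open Classical

attribute [local instance] Classical.propDecidable

noncomputable section

/-- Continuous-path carrier type: maps from `[0,1]` to `ℂⁿ`. -/
abbrev PathC (n : ℕ) := unitInterval → (Fin n → ℂ)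

/-- The sphere of quaternionic imaginary units `𝕊 = {I : I² = -1}`. -/
def SQ : Set ℍ[ℝ] := {I | I ^ 2 = -1}

/-- A quaternion is real if it is the image of a real number. -/
def IsRealQ (p : ℍ[ℝ]) : Prop := ∃ r : ℝ, p = (r : ℍ[ℝ])

/-- `Ψ_i^I : ℂⁿ → ℂ_Iⁿ`, componentwise `x + y i ↦ x + y I`. -/
def psi {n : ℕ} (I : ℍ[ℝ]) (z : Fin n → ℂ) : Fin n → ℍ[ℝ] :=
  fun k => ((z k).re : ℍ[ℝ]) + (z k).im • I

/-- The slice `ℂ_I = {x + y I}` as a subset of the quaternions. -/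
def CI (I : ℍ[ℝ]) : Set ℍ[ℝ] := {p | ∃ x y : ℝ, p = (x : ℍ[ℝ]) + y • I}

/-- The weakly slice cone `ℍ_sⁿ = ⋃_{I ∈ 𝕊} ℂ_Iⁿ`. -/
def HSliceCone (n : ℕ) : Set (Fin n → ℍ[ℝ]) := ⋃ I ∈ SQ, Set.range (psi (n := n) I)

/-- Membership in `𝒫(ℂⁿ)`: continuous with real initial point. -/
def IsPathP {n : ℕ} (γ : PathC n) : Prop :=
  Continuous γ ∧ ∀ k, ((γ 0) k).im = 0

/-- `γ^I ⊂ Ω`. -/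
def pathInSlice {n : ℕ} (Ω : Set (Fin n → ℍ[ℝ])) (I : ℍ[ℝ]) (γ : PathC n) : Prop :=
  ∀ t, psi I (γ t) ∈ Ω

/-- `𝕊(Ω, γ) = {I ∈ 𝕊 : γ^I ⊂ Ω}`. -/
def SGamma {n : ℕ} (Ω : Set (Fin n → ℍ[ℝ])) (γ : PathC n) : Set ℍ[ℝ] :=
  {I | I ∈ SQ ∧ pathInSlice Ω I γ}

/-- `γ ∈ 𝒫(ℂⁿ, Ω)`. -/
def PathIn {n : ℕ} (Ω : Set (Fin n → ℍ[ℝ])) (γ : PathC n) : Prop :=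
  IsPathP γ ∧ ∃ I, I ∈ SGamma Ω γ

/-- `F` is a path-slice stem function of `f` on `Ω`. -/
def IsStem {n : ℕ} (Ω : Set (Fin n → ℍ[ℝ])) (f : (Fin n → ℍ[ℝ]) → ℍ[ℝ])
    (F : PathC n → ℍ[ℝ] × ℍ[ℝ]) : Prop :=
  ∀ γ, PathIn Ω γ → ∀ I ∈ SGamma Ω γ, f (psi I (γ 1)) = (F γ).1 + I * (F γ).2

/-- `f` is a path-slice function on `Ω`. -/
def PathSlice {n : ℕ} (Ω : Set (Fin n → ℍ[ℝ])) (f : (Fin n → ℍ[ℝ]) → ℍ[ℝ]) : Prop :=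
  ∃ F, IsStem Ω f F

/-- `Ω` is real-path-connected. -/
def RealPathConnected {n : ℕ} (Ω : Set (Fin n → ℍ[ℝ])) : Prop :=
  ∀ q ∈ Ω, ∃ γ : PathC n, PathIn Ω γ ∧ ∃ I ∈ SGamma Ω γ, psi I (γ 1) = q

/-- `Ω₂` is `Ω₁`-stem-preserving. -/
def StemPreserving {n : ℕ} (Ω₁ Ω₂ : Set (Fin n → ℍ[ℝ])) : Prop :=
  (∀ γ : PathC n, PathIn Ω₁ γ → (SGamma Ω₂ γ).Nontrivial) ∧
  (∀ α β : PathC n, PathIn Ω₁ α → PathIn Ω₁ β → α 1 = β 1 →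
    ¬ ∃ I, SGamma Ω₂ α ∩ SGamma Ω₂ β = {I})

/-- `Ω` is self-stem-preserving. -/
def SelfStemPreserving {n : ℕ} (Ω : Set (Fin n → ℍ[ℝ])) : Prop :=
  RealPathConnected Ω ∧ StemPreserving Ω Ω

/-- The map `𝕴 : ℍ_sⁿ → 𝕊 ∪ {0}`. -/
def frakI {n : ℕ} (q : Fin n → ℍ[ℝ]) : ℍ[ℝ] :=
  if h : ∀ k, IsRealQ (q k) then 0
  else
    let k := (Finset.univ.filter fun k => ¬ IsRealQ (q k)).min' (by
      push_neg at h
      obtain ⟨k, hk⟩ := h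
      exact ⟨k, Finset.mem_filter.mpr ⟨Finset.mem_univ k, hk⟩⟩)
    ‖q k - ((q k).re : ℍ[ℝ])‖⁻¹ • (q k - ((q k).re : ℍ[ℝ]))

/-- A choice of path-slice stem function of `f` (on paths in `Ω`); by
the results of Dou–Jin–Ren–Yang its restriction to `𝒫(ℂⁿ, Ω₁)` is the canonical `F^f_{Ω₁}`. -/
def stemOf {n : ℕ} (Ω : Set (Fin n → ℍ[ℝ])) (f : (Fin n → ℍ[ℝ]) → ℍ[ℝ]) :
    PathC n → ℍ[ℝ] × ℍ[ℝ] :=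
  Classical.epsilon (IsStem Ω f)

/-- The function `ℱ^f_{Ω₁} : Ω₁ → ℍ²` induced by the stem of `f` (path-slice on `Ω₂`). -/
def scrF {n : ℕ} (Ω₁ Ω₂ : Set (Fin n → ℍ[ℝ])) (f : (Fin n → ℍ[ℝ]) → ℍ[ℝ])
    (q : Fin n → ℍ[ℝ]) : ℍ[ℝ] × ℍ[ℝ] :=
  if ∀ k, IsRealQ (q k) then (f q, 0)
  else stemOf Ω₂ f (Classical.epsilon (fun γ : PathC n =>
    PathIn Ω₁ γ ∧ pathInSlice Ω₁ (frakI q) γ ∧ psi (frakI q) (γ 1) = q))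

/-- The `Ω₁`-slice conjugation `f^c_{Ω₁}`. -/
def sliceConj {n : ℕ} (Ω₁ Ω₂ : Set (Fin n → ℍ[ℝ])) (f : (Fin n → ℍ[ℝ]) → ℍ[ℝ]) :
    (Fin n → ℍ[ℝ]) → ℍ[ℝ] :=
  fun q => star (scrF Ω₁ Ω₂ f q).1 + frakI q * star (scrF Ω₁ Ω₂ f q).2

/-- The `*`-product `g * f` of a path-slice `g : Ω₁ → ℍ` with `f : Ω₂ → ℍ`. -/
def starProdF {n : ℕ} (Ω₁ Ω₂ : Set (Fin n → ℍ[ℝ])) (g f : (Fin n → ℍ[ℝ]) → ℍ[ℝ]) :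
    (Fin n → ℍ[ℝ]) → ℍ[ℝ] :=
  fun q => g q * (scrF Ω₁ Ω₂ f q).1 + frakI q * g q * (scrF Ω₁ Ω₂ f q).2

/-- The symmetrization `f^s_{Ω₁} = f^c_{Ω₁} * f`. -/
def symmF {n : ℕ} (Ω₁ Ω₂ : Set (Fin n → ℍ[ℝ])) (f : (Fin n → ℍ[ℝ]) → ℍ[ℝ]) :
    (Fin n → ℍ[ℝ]) → ℍ[ℝ] :=
  starProdF Ω₁ Ω₂ (sliceConj Ω₁ Ω₂ f) f

/-- The pointwise `*`-product on `ℍ²`. -/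
def starPair (p q : ℍ[ℝ] × ℍ[ℝ]) : ℍ[ℝ] × ℍ[ℝ] :=
  (p.1 * q.1 - p.2 * q.2, p.2 * q.1 + p.1 * q.2)

/-- Slice-open sets: every slice is open (pulled back to `ℂⁿ` via `Ψ_i^I`). -/
def SliceOpen {n : ℕ} (U : Set (Fin n → ℍ[ℝ])) : Prop :=
  ∀ I ∈ SQ, IsOpen {z : Fin n → ℂ | psi I z ∈ U}

/-- Weakly slice regular functions: each slice restriction is left `I`-holomorphic. -/
def SliceRegular {n : ℕ} (Ω : Set (Fin n → ℍ[ℝ])) (f : (Fin n → ℍ[ℝ]) → ℍ[ℝ]) : Prop :=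
  ∀ I ∈ SQ, ∀ z : Fin n → ℂ, psi I z ∈ Ω →
    DifferentiableWithinAt ℝ (fun w => f (psi I w)) {w | psi I w ∈ Ω} z ∧
    ∀ ℓ : Fin n,
      fderivWithin ℝ (fun w => f (psi I w)) {w | psi I w ∈ Ω} z (Pi.single ℓ 1)
        + I * fderivWithin ℝ (fun w => f (psi I w)) {w | psi I w ∈ Ω} z (Pi.single ℓ Complex.I)
        = 0

/-- The ball `B_I(q, r)` inside the slice `ℂ_Iⁿ`. -/
def BI {n : ℕ} (I : ℍ[ℝ]) (q : Fin n → ℍ[ℝ]) (r : ℝ) : Set (Fin n → ℍ[ℝ]) :=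
  {p | p ∈ Set.range (psi (n := n) I) ∧ dist p q < r}

/-- The slice topology. -/
def sliceTop (n : ℕ) : TopologicalSpace (Fin n → ℍ[ℝ]) where
  IsOpen := SliceOpen
  isOpen_univ := by intro I _; simpa using isOpen_univ
  isOpen_inter := by
    intro s t hs ht I hI
    have h : {z : Fin n → ℂ | psi I z ∈ s ∩ t}
        = {z : Fin n → ℂ | psi I z ∈ s} ∩ {z : Fin n → ℂ | psi I z ∈ t} := by
      ext z; simp [Set.mem_inter_iff]
    rw [h]
    exact (hs I hI).inter (ht I hI)
  isOpen_sUnion := by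
    intro S hS I hI
    have h : {z : Fin n → ℂ | psi I z ∈ ⋃₀ S} = ⋃ s ∈ S, {z : Fin n → ℂ | psi I z ∈ s} := by
      ext z; simp
    rw [h]
    exact isOpen_biUnion fun s hs => hS s hs I hI

/-- Slice-domains: nonempty slice-open sets connected in the slice topology. -/
def SliceDomain {n : ℕ} (Ω : Set (Fin n → ℍ[ℝ])) : Prop :=
  SliceOpen Ω ∧ @IsConnected _ (sliceTop n) Ω

/-- Concatenation `γ · ℒ_{γ(1)}^z` of a path with the segment from `γ(1)` to `z`. -/
def concatSeg {n : ℕ} (γ : PathC n) (z : Fin n → ℂ) : PathC n := fun t =>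
  if h : (t : ℝ) ≤ 1 / 2 then
    γ ⟨2 * (t : ℝ), ⟨by linarith [t.2.1], by linarith⟩⟩
  else
    (1 - (2 * (t : ℝ) - 1)) • γ 1 + (2 * (t : ℝ) - 1) • z

/-- The action of `σ` on `ℍ²`: `σ(p₁, p₂) = (-p₂, p₁)`. -/
def sigmaAct (p : ℍ[ℝ] × ℍ[ℝ]) : ℍ[ℝ] × ℍ[ℝ] := (-p.2, p.1)

/-- `F : 𝒫(ℂⁿ, Ω) → ℍ²` is holomorphic at the path `γ`. -/
def StemHoloAt {n : ℕ} (Ω : Set (Fin n → ℍ[ℝ])) (F : PathC n → ℍ[ℝ] × ℍ[ℝ])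
    (γ : PathC n) : Prop :=
  ∃ r > 0, (∀ z ∈ Metric.ball (γ 1) r, PathIn Ω (concatSeg γ z)) ∧
    ∀ z ∈ Metric.ball (γ 1) r,
      DifferentiableAt ℝ (fun w => F (concatSeg γ w)) z ∧
      ∀ ℓ : Fin n,
        fderiv ℝ (fun w => F (concatSeg γ w)) z (Pi.single ℓ 1)
          + sigmaAct (fderiv ℝ (fun w => F (concatSeg γ w)) z (Pi.single ℓ Complex.I)) = 0

/-- `F` is holomorphic (at every path of `𝒫(ℂⁿ, Ω)`). -/
def StemHolo {n : ℕ} (Ω : Set (Fin n → ℍ[ℝ])) (F : PathC n → ℍ[ℝ] × ℍ[ℝ]) : Prop :=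
  ∀ γ, PathIn Ω γ → StemHoloAt Ω F γ

/-- `E` is a complex-analytic subset of the open set `U ⊂ ℂⁿ`. -/
def IsComplexAnalyticSubset {n : ℕ} (U E : Set (Fin n → ℂ)) : Prop :=
  E ⊆ U ∧ ∀ z ∈ U, ∃ V, V ⊆ U ∧ IsOpen V ∧ z ∈ V ∧
    ∃ (m : ℕ) (h : Fin m → (Fin n → ℂ) → ℂ),
      (∀ j, DifferentiableOn ℂ (h j) V) ∧ E ∩ V = {w | w ∈ V ∧ ∀ j, h j w = 0}

/-- `A` is a path-slice analytic subset of the slice-domain `Ω`. -/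
def PathSliceAnalytic {n : ℕ} (Ω A : Set (Fin n → ℍ[ℝ])) : Prop :=
  A = Ω ∨ ∀ γ : PathC n, PathIn Ω γ →
    ∃ r > 0, ∃ rI : ℍ[ℝ] → ℝ, (∀ I ∈ SGamma Ω γ, rI I ∈ Set.Ioc (0 : ℝ) r) ∧
      ∃ E : Set (Fin n → ℂ), IsComplexAnalyticSubset (Metric.ball (γ 1) r) E ∧
        E ≠ Metric.ball (γ 1) r ∧
        ∀ I ∈ SGamma Ω γ, A ∩ BI I (psi I (γ 1)) (rI I) ⊆ psi I '' E


lemma SQ_re_zero {I : ℍ[ℝ]} (hI : I ∈ SQ) : I.re = 0 := by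
  have h : I ^ 2 = -1 := hI
  have hns : Quaternion.normSq I = 1 := by
    have h2 : Quaternion.normSq I ^ 2 = 1 := by
      rw [← map_pow, h]; simp
    have hnn := Quaternion.normSq_nonneg (a := I)
    nlinarith
  exact Quaternion.sq_eq_neg_normSq.mp (by rw [hns]; simpa using h)

/-- for real-path-connected `Ω`, every point `Ψ_i^I(z) ∈ Ω` is the endpoint
of a path `γ ∈ 𝒫(ℂⁿ, Ω)` with `γ^I ⊂ Ω`. -/
theorem exists_path_to_point {n : ℕ} (Ω : Set (Fin n → ℍ[ℝ])) (hΩ : Ω ⊆ HSliceCone n)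
    (hrpc : RealPathConnected Ω) (I : ℍ[ℝ]) (hI : I ∈ SQ) (z : Fin n → ℂ)
    (hz : psi I z ∈ Ω) :
    ∃ γ : PathC n, PathIn Ω γ ∧ pathInSlice Ω I γ ∧ psi I (γ 1) = psi I z := by
  by_cases hreal : ∀ k, (z k).im = 0
  · -- constant path
    have key : ∀ t : unitInterval, psi I ((fun _ k => ((z k).re : ℂ)) t) = psi I z := by
      intro t; funext k; simp [psi, hreal k]
    refine ⟨fun _ k => ((z k).re : ℂ), ⟨⟨continuous_const, fun k => by simp⟩,
      ⟨I, hI, fun t => by rw [key t]; exact hz⟩⟩, fun t => by rw [key t]; exact hz, key 1⟩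
  · push_neg at hreal
    obtain ⟨k0, hk0⟩ := hreal
    obtain ⟨γ, hγ, J, hJ, hend⟩ := hrpc _ hz
    have hJre : J.re = 0 := SQ_re_zero hJ.1
    have hIre : I.re = 0 := SQ_re_zero hI
    -- component equation
    have hcomp : ((γ 1 k0).re : ℍ[ℝ]) + (γ 1 k0).im • J
        = ((z k0).re : ℍ[ℝ]) + (z k0).im • I := congrFun hend k0
    have him : (γ 1 k0).im • J = (z k0).im • I := by
      have hre : (γ 1 k0).re = (z k0).re := by
        have := congrArg QuaternionAlgebra.re hcomp
        simpa [Quaternion.re_smul, hJre, hIre] using this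
      rw [hre] at hcomp
      exact add_left_cancel hcomp
    set a := (γ 1 k0).im
    set b := (z k0).im
    have hIJ : I = (b⁻¹ * a) • J := by
      have : b⁻¹ • (a • J) = b⁻¹ • (b • I) := by rw [him]
      rw [smul_smul, smul_smul, inv_mul_cancel₀ hk0, one_smul] at this
      exact this.symm
    set c := b⁻¹ * a with hc
    have hc2 : c ^ 2 = 1 := by
      have h1 : I ^ 2 = -1 := hI
      rw [hIJ, smul_pow] at h1
      have h2 : J ^ 2 = -1 := hJ.1
      rw [h2] at h1
      have : (c ^ 2) • (1 : ℍ[ℝ]) = 1 := by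
        have := congrArg Neg.neg h1
        simpa [smul_neg] using this
      have := congrArg QuaternionAlgebra.re this
      simpa using this
    have hcc : c = 1 ∨ c = -1 := by
      have hcc' : c * c = 1 := by rw [← pow_two]; exact hc2
      rcases mul_self_eq_one_iff.mp hcc' with h | h
      · exact Or.inl h
      · exact Or.inr h
    rcases hcc with h1 | h1
    · -- I = J
      have hIJ' : J = I := by rw [hIJ, h1, one_smul]
      subst hIJ'
      exact ⟨γ, hγ, hJ.2, hend⟩
    · -- I = -J, use conjugate path
      have hJI : J = -I := by rw [hIJ, h1]; simp
      set γ' : PathC n := fun t k => starRingEnd ℂ (γ t k) with hγ'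
      have hpsi : ∀ t, psi I (γ' t) = psi J (γ t) := by
        intro t
        funext k
        simp only [psi, hγ', Complex.conj_re, Complex.conj_im, hJI]
        rw [neg_smul, smul_neg]
      refine ⟨γ', ⟨⟨?_, ?_⟩, ⟨I, hI, fun t => by rw [hpsi t]; exact hJ.2 t⟩⟩,
        fun t => by rw [hpsi t]; exact hJ.2 t, by rw [hpsi 1]; exact hend⟩
      · exact continuous_pi fun k => (Complex.continuous_conj).comp
          ((continuous_apply k).comp hγ.1.1)
      · intro k; simp [hγ', hγ.1.2 k]


end
end

section
/- Let Ω₁ ⊂ ℍ_s^n be real-path-connected, let Ω₂ ⊂ ℍ_s^n be Ω₁-stem-preserving, let c ∈ ℍ, let f : Ω₂ → ℍ be path-slice, let γ ∈ 𝒫(ℂ^n, Ω₁), let I ∈ 𝕊(Ω₁, γ), and set q := γ^I(1). Then c·conj(F^{f,1}_{Ω₁}(γ)) + I·c·conj(F^{f,2}_{Ω₁}(γ)) = c·conj(F^{f,1}_{Ω₁}(γ̄)) − I·c·conj(F^{f,2}_{Ω₁}(γ̄)) = c·conj(ℱ^{f,1}_{Ω₁}(q)) + 𝕴(q)·c·conj(ℱ^{f,2}_{Ω₁}(q)),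 where γ̄ denotes the componentwise complex-conjugate path t ↦ conj(γ(t)). -/
open scoped Quaternion
open Classical

attribute [local instance] Classical.propDecidable

noncomputable section

/-!
A path-slice stem `F` is pinned down at a path `γ` by the values of `f` on two distinct slices
of `γ`, because `a + J b = a' + J b'` and `a + K b = a' + K b'` with `J ≠ K` force
`(a, b) = (a', b')`; stem-preservation supplies two such slices for every path of `Ω₁`.
Since `γ̄` in the slice `-J` is `γ` in the slice `J`, this gives `F(γ̄) = (F₁(γ), -F₂(γ))`, and
`F` agrees on two paths of `Ω₁` with a common endpoint in a common slice (apply the argument to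
the first path followed by the second one backwards). Off the reals `𝕴(q) = ±I`, so `ℱ(q)` is
`F(γ)` or `F(γ̄)`; at a real endpoint `F(γ) = ℱ(q) = (f q, 0)`.
-/

theorem Prod.eq_of_add_mul_eq {R : Type*} [Ring R] [NoZeroDivisors R] {J K : R} (hJK : J ≠ K)
    {p p' : R × R} (hJ : p.1 + J * p.2 = p'.1 + J * p'.2)
    (hK : p.1 + K * p.2 = p'.1 + K * p'.2) : p = p' := by
  have h2 : (J - K) * p.2 = (J - K) * p'.2 := by
    simpa only [add_sub_add_left_eq_sub, ← sub_mul] using congrArg₂ (· - ·) hJ hK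
  have h2 := mul_left_cancel₀ (sub_ne_zero.2 hJK) h2
  rw [h2, add_left_inj] at hJ
  exact Prod.ext hJ h2

namespace SQ

variable {I : ℍ[ℝ]}

theorem norm_eq_one (hI : I ∈ SQ) : ‖I‖ = 1 := by
  have h : ‖I‖ ^ 2 = 1 := by rw [← norm_pow, hI.out, norm_neg, norm_one]
  exact (pow_eq_one_iff_of_nonneg (norm_nonneg I) two_ne_zero).1 h

theorem ne_zero (hI : I ∈ SQ) : I ≠ 0 :=
  norm_ne_zero_iff.1 (by rw [norm_eq_one hI]; exact one_ne_zero)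

theorem re_eq_zero (hI : I ∈ SQ) : I.re = 0 := by
  rw [← Quaternion.sq_eq_neg_normSq, Quaternion.normSq_eq_norm_mul_self, norm_eq_one hI,
    mul_one]
  exact hI

theorem neg_mem (hI : I ∈ SQ) : -I ∈ SQ := by
  show (-I) ^ 2 = -1
  rw [neg_sq]
  exact hI

theorem ofReal_add_smul_inj (hI : I ∈ SQ) {x y x' y' : ℝ} :
    (x : ℍ[ℝ]) + y • I = x' + y' • I ↔ x = x' ∧ y = y' := by
  refine ⟨fun h => ?_, fun ⟨hx, hy⟩ => hx ▸ hy ▸ rfl⟩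
  have hx : x = x' := by
    simpa [Quaternion.re_smul, re_eq_zero hI] using congrArg QuaternionAlgebra.re h
  rw [hx, add_right_inj] at h
  exact ⟨hx, smul_left_injective ℝ (ne_zero hI) h⟩

theorem isRealQ_ofReal_add_smul_iff (hI : I ∈ SQ) {x y : ℝ} :
    IsRealQ ((x : ℍ[ℝ]) + y • I) ↔ y = 0 := by
  refine ⟨fun ⟨r, hr⟩ => ?_, fun hy => ⟨x, by simp [hy]⟩⟩
  rw [← add_zero (r : ℍ[ℝ]), ← zero_smul ℝ I, ofReal_add_smul_inj hI] at hr
  exact hr.2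

theorem inv_norm_smul_self_eq_or (hI : I ∈ SQ) {y : ℝ} (hy : y ≠ 0) :
    ‖y • I‖⁻¹ • (y • I) = I ∨ ‖y • I‖⁻¹ • (y • I) = -I := by
  rw [norm_smul, norm_eq_one hI, mul_one, smul_smul, Real.norm_eq_abs]
  rcases hy.lt_or_gt with hneg | hpos
  · right
    rw [abs_of_neg hneg, inv_neg, neg_mul, inv_mul_cancel₀ hy, neg_one_smul]
  · left
    rw [abs_of_pos hpos, inv_mul_cancel₀ hy, one_smul]

end SQ

section Slices

variable {n : ℕ}

theorem psi_injective {I : ℍ[ℝ]} (hI : I ∈ SQ) : Function.Injective (psi (n := n) I) :=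
  fun _ _ h => funext fun k =>
    let ⟨hre, him⟩ := (SQ.ofReal_add_smul_inj hI).1 (congrFun h k)
    Complex.ext hre him

theorem psi_conj (I : ℍ[ℝ]) (z : Fin n → ℂ) :
    psi I (fun k => starRingEnd ℂ (z k)) = psi (-I) z := by
  funext k
  simp [psi]

theorem forall_isRealQ_psi_iff {I : ℍ[ℝ]} (hI : I ∈ SQ) {z : Fin n → ℂ} :
    (∀ k, IsRealQ (psi I z k)) ↔ ∀ k, (z k).im = 0 :=
  forall_congr' fun _ => SQ.isRealQ_ofReal_add_smul_iff hI

theorem psi_eq_of_forall_im_eq_zero {z : Fin n → ℂ} (hz : ∀ k, (z k).im = 0) (I J : ℍ[ℝ]) :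
    psi I z = psi J z := by
  funext k
  simp [psi, hz k]

theorem frakI_eq_zero {q : Fin n → ℍ[ℝ]} (hq : ∀ k, IsRealQ (q k)) : frakI q = 0 :=
  dif_pos hq

theorem frakI_psi {I : ℍ[ℝ]} (hI : I ∈ SQ) {z : Fin n → ℂ} (hz : ¬ ∀ k, (z k).im = 0) :
    frakI (psi I z) = I ∨ frakI (psi I z) = -I := by
  rw [← forall_isRealQ_psi_iff hI] at hz
  have hunit : ∀ k, ¬ IsRealQ (psi I z k) →
      ‖psi I z k - ((psi I z k).re : ℍ[ℝ])‖⁻¹ • (psi I z k - ((psi I z k).re : ℍ[ℝ])) = I ∨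
      ‖psi I z k - ((psi I z k).re : ℍ[ℝ])‖⁻¹ • (psi I z k - ((psi I z k).re : ℍ[ℝ])) = -I := by
    intro k hk
    have hsub : psi I z k - ((psi I z k).re : ℍ[ℝ]) = (z k).im • I := by
      simp [psi, Quaternion.re_smul, SQ.re_eq_zero hI]
    rw [hsub]
    exact SQ.inv_norm_smul_self_eq_or hI fun h => hk ((SQ.isRealQ_ofReal_add_smul_iff hI).2 h)
  rw [frakI, dif_neg hz]
  exact hunit _ (Finset.mem_filter.1 (Finset.min'_mem
    (Finset.univ.filter fun k => ¬ IsRealQ (psi I z k)) _)).2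

end Slices

section Paths

variable {n : ℕ}

def conjPath (γ : PathC n) : PathC n := fun t k => starRingEnd ℂ (γ t k)

theorem pathInSlice_iff_range_subset {Ω : Set (Fin n → ℍ[ℝ])} {I : ℍ[ℝ]} {γ : PathC n} :
    pathInSlice Ω I γ ↔ Set.range γ ⊆ psi I ⁻¹' Ω := by
  rw [Set.range_subset_iff]
  rfl

theorem IsPathP.conjPath {γ : PathC n} (hγ : IsPathP γ) : IsPathP (conjPath γ) :=
  ⟨continuous_pi fun k => Complex.continuous_conj.comp ((continuous_apply k).comp hγ.1),
    fun k => by simp [_root_.conjPath, hγ.2 k]⟩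

theorem psi_conjPath_apply (I : ℍ[ℝ]) (γ : PathC n) (t : unitInterval) :
    psi I (conjPath γ t) = psi (-I) (γ t) :=
  psi_conj I (γ t)

theorem mem_SGamma_conjPath {Ω : Set (Fin n → ℍ[ℝ])} {γ : PathC n} {J : ℍ[ℝ]} :
    J ∈ SGamma Ω (conjPath γ) ↔ -J ∈ SGamma Ω γ := by
  simp only [SGamma, pathInSlice, Set.mem_ofPred_eq, psi_conjPath_apply]
  exact and_congr_left' ⟨SQ.neg_mem, fun h => neg_neg J ▸ SQ.neg_mem h⟩

theorem IsPathP.exists_range_eq_union {α β : PathC n} (hα : IsPathP α) (hβ : Continuous β)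
    (h : α 1 = β 1) : ∃ τ : PathC n, IsPathP τ ∧ Set.range τ = Set.range α ∪ Set.range β := by
  let pα : Path (α 0) (α 1) := ⟨⟨α, hα.1⟩, rfl, rfl⟩
  let pβ : Path (β 0) (β 1) := ⟨⟨β, hβ⟩, rfl, rfl⟩
  let τ := pα.trans (pβ.symm.cast h rfl)
  refine ⟨τ, ⟨τ.continuous, fun k => by rw [τ.source]; exact hα.2 k⟩, ?_⟩
  rw [Path.trans_range, Path.cast_coe, Path.symm_range]
  rfl

end Paths

section Stems

variable {n : ℕ} {Ω₁ Ω₂ : Set (Fin n → ℍ[ℝ])} {f : (Fin n → ℍ[ℝ]) → ℍ[ℝ]}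
  {F : PathC n → ℍ[ℝ] × ℍ[ℝ]}

theorem IsStem.apply_psi (hF : IsStem Ω₂ f F) {γ : PathC n} (hγ : IsPathP γ) {J : ℍ[ℝ]}
    (hJ : J ∈ SGamma Ω₂ γ) : f (psi J (γ 1)) = (F γ).1 + J * (F γ).2 :=
  hF γ ⟨hγ, J, hJ⟩ J hJ

theorem IsStem.eq_of_nontrivial (hF : IsStem Ω₂ f F) {γ : PathC n} (hγ : IsPathP γ)
    {S : Set ℍ[ℝ]} (hS : S.Nontrivial) (hSγ : S ⊆ SGamma Ω₂ γ) {p : ℍ[ℝ] × ℍ[ℝ]}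
    (hp : ∀ J ∈ S, f (psi J (γ 1)) = p.1 + J * p.2) : F γ = p := by
  obtain ⟨J, hJ, K, hK, hJK⟩ := hS
  refine Prod.eq_of_add_mul_eq hJK ?_ ?_
  · rw [← hF.apply_psi hγ (hSγ hJ), hp J hJ]
  · rw [← hF.apply_psi hγ (hSγ hK), hp K hK]

theorem IsStem.apply_eq_of_pathInSlice (hF : IsStem Ω₂ f F)
    (hsp : ∀ γ, PathIn Ω₁ γ → (SGamma Ω₂ γ).Nontrivial) {α β : PathC n} (hα : IsPathP α)
    (hβ : IsPathP β) (h : α 1 = β 1) {J : ℍ[ℝ]} (hJα : J ∈ SGamma Ω₁ α) (hJβ : pathInSlice Ω₁ J β) :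
    F α = F β := by
  obtain ⟨τ, hτ, hτrange⟩ := hα.exists_range_eq_union hβ.1 h
  have hτΩ₁ : PathIn Ω₁ τ := ⟨hτ, J, hJα.1, pathInSlice_iff_range_subset.2 (by
    rw [hτrange]
    exact Set.union_subset (pathInSlice_iff_range_subset.1 hJα.2)
      (pathInSlice_iff_range_subset.1 hJβ))⟩
  have hτ_sub : ∀ {K}, K ∈ SGamma Ω₂ τ → K ∈ SGamma Ω₂ α ∧ K ∈ SGamma Ω₂ β := by
    intro K hK
    have hsub := pathInSlice_iff_range_subset.1 hK.2
    rw [hτrange, Set.union_subset_iff] at hsub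
    exact ⟨⟨hK.1, pathInSlice_iff_range_subset.2 hsub.1⟩,
      ⟨hK.1, pathInSlice_iff_range_subset.2 hsub.2⟩⟩
  refine hF.eq_of_nontrivial hα (hsp τ hτΩ₁) (fun K hK => (hτ_sub hK).1) fun K hK => ?_
  rw [h]
  exact hF.apply_psi hβ (hτ_sub hK).2

theorem IsStem.apply_conjPath (hF : IsStem Ω₂ f F)
    (hsp : ∀ γ, PathIn Ω₁ γ → (SGamma Ω₂ γ).Nontrivial) {γ : PathC n} (hγ : PathIn Ω₁ γ) :
    F (conjPath γ) = ((F γ).1, -(F γ).2) := by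
  obtain ⟨hγP, I, hI⟩ := hγ
  have hγ' : PathIn Ω₁ (conjPath γ) :=
    ⟨hγP.conjPath, -I, mem_SGamma_conjPath.2 (by rwa [neg_neg])⟩
  refine hF.eq_of_nontrivial hγP.conjPath (hsp _ hγ') subset_rfl fun J hJ => ?_
  rw [psi_conjPath_apply, hF.apply_psi hγP (mem_SGamma_conjPath.1 hJ), neg_mul, mul_neg]

theorem IsStem.apply_of_forall_im_eq_zero (hF : IsStem Ω₂ f F)
    (hsp : ∀ γ, PathIn Ω₁ γ → (SGamma Ω₂ γ).Nontrivial) {γ : PathC n} (hγ : PathIn Ω₁ γ)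
    (hreal : ∀ k, (γ 1 k).im = 0) (I : ℍ[ℝ]) : F γ = (f (psi I (γ 1)), 0) :=
  hF.eq_of_nontrivial hγ.1 (hsp γ hγ) subset_rfl fun J _ => by
    rw [psi_eq_of_forall_im_eq_zero hreal J I, mul_zero, add_zero]

end Stems

section ScrF

variable {n : ℕ} {Ω₁ Ω₂ : Set (Fin n → ℍ[ℝ])} {f : (Fin n → ℍ[ℝ]) → ℍ[ℝ]}

theorem PathSlice.stemOf_isStem (hf : PathSlice Ω₂ f) : IsStem Ω₂ f (stemOf Ω₂ f) :=
  Classical.epsilon_spec hf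

theorem scrF_of_forall_isRealQ {q : Fin n → ℍ[ℝ]} (hq : ∀ k, IsRealQ (q k)) :
    scrF Ω₁ Ω₂ f q = (f q, 0) :=
  if_pos hq

theorem scrF_psi_eq_stemOf (hsp : ∀ γ, PathIn Ω₁ γ → (SGamma Ω₂ γ).Nontrivial)
    (hf : PathSlice Ω₂ f) {δ : PathC n} (hδ : IsPathP δ) {J : ℍ[ℝ]} (hJ : J ∈ SGamma Ω₁ δ)
    (hfrak : frakI (psi J (δ 1)) = J) :
    scrF Ω₁ Ω₂ f (psi J (δ 1)) = stemOf Ω₂ f δ := by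
  have hq : ¬ ∀ k, IsRealQ (psi J (δ 1) k) := fun h =>
    SQ.ne_zero hJ.1 (hfrak.symm.trans (frakI_eq_zero h))
  rw [scrF, if_neg hq, hfrak]
  have hβ := Classical.epsilon_spec (p := fun β : PathC n =>
    PathIn Ω₁ β ∧ pathInSlice Ω₁ J β ∧ psi J (β 1) = psi J (δ 1)) ⟨δ, ⟨hδ, J, hJ⟩, hJ.2, rfl⟩
  exact hf.stemOf_isStem.apply_eq_of_pathInSlice hsp hβ.1.1 hδ
    (psi_injective hJ.1 hβ.2.2) ⟨hJ.1, hβ.2.1⟩ hJ.2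

end ScrF

theorem conj_stem_relations_general {n : ℕ} (Ω₁ Ω₂ : Set (Fin n → ℍ[ℝ]))
    (hsp : StemPreserving Ω₁ Ω₂)
    (c : ℍ[ℝ]) (f : (Fin n → ℍ[ℝ]) → ℍ[ℝ]) (hf : PathSlice Ω₂ f)
    (γ : PathC n) (hγ : PathIn Ω₁ γ) (I : ℍ[ℝ]) (hI : I ∈ SGamma Ω₁ γ) :
    (c * star (stemOf Ω₂ f γ).1 + I * c * star (stemOf Ω₂ f γ).2
        = c * star (stemOf Ω₂ f (fun t k => (starRingEnd ℂ) (γ t k))).1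
          - I * c * star (stemOf Ω₂ f (fun t k => (starRingEnd ℂ) (γ t k))).2) ∧
    (c * star (stemOf Ω₂ f γ).1 + I * c * star (stemOf Ω₂ f γ).2
        = c * star (scrF Ω₁ Ω₂ f (psi I (γ 1))).1
          + frakI (psi I (γ 1)) * c * star (scrF Ω₁ Ω₂ f (psi I (γ 1))).2) := by
  have hconj := hf.stemOf_isStem.apply_conjPath hsp.1 hγ
  refine ⟨?_, ?_⟩
  · rw [show (fun t k => (starRingEnd ℂ) (γ t k)) = conjPath γ from rfl, hconj, star_neg,
      mul_neg, sub_neg_eq_add]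
  by_cases hreal : ∀ k, (γ 1 k).im = 0
  · have hq := (forall_isRealQ_psi_iff hI.1).2 hreal
    rw [scrF_of_forall_isRealQ hq, frakI_eq_zero hq,
      hf.stemOf_isStem.apply_of_forall_im_eq_zero hsp.1 hγ hreal I]
    simp
  rcases frakI_psi hI.1 hreal with hfrak | hfrak
  · rw [hfrak, scrF_psi_eq_stemOf hsp.1 hf hγ.1 hI hfrak]
  · have hq : psi I (γ 1) = psi (-I) (conjPath γ 1) := by rw [psi_conjPath_apply, neg_neg]
    rw [hfrak, hq, scrF_psi_eq_stemOf hsp.1 hf hγ.1.conjPath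
      (mem_SGamma_conjPath.2 (by rwa [neg_neg])) (hq ▸ hfrak), hconj]
    simp only [star_neg, mul_neg, neg_mul, neg_neg]

/-- the three expressions built from conjugated stem values agree. -/
theorem conj_stem_relations {n : ℕ} (Ω₁ Ω₂ : Set (Fin n → ℍ[ℝ]))
    (h1 : Ω₁ ⊆ HSliceCone n) (h2 : Ω₂ ⊆ HSliceCone n)
    (hrpc : RealPathConnected Ω₁) (hsp : StemPreserving Ω₁ Ω₂)
    (c : ℍ[ℝ]) (f : (Fin n → ℍ[ℝ]) → ℍ[ℝ]) (hf : PathSlice Ω₂ f)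
    (γ : PathC n) (hγ : PathIn Ω₁ γ) (I : ℍ[ℝ]) (hI : I ∈ SGamma Ω₁ γ) :
    (c * star (stemOf Ω₂ f γ).1 + I * c * star (stemOf Ω₂ f γ).2
        = c * star (stemOf Ω₂ f (fun t k => (starRingEnd ℂ) (γ t k))).1
          - I * c * star (stemOf Ω₂ f (fun t k => (starRingEnd ℂ) (γ t k))).2) ∧
    (c * star (stemOf Ω₂ f γ).1 + I * c * star (stemOf Ω₂ f γ).2
        = c * star (scrF Ω₁ Ω₂ f (psi I (γ 1))).1
          + frakI (psi I (γ 1)) * c * star (scrF Ω₁ Ω₂ f (psi I (γ 1))).2) :=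
  conj_stem_relations_general Ω₁ Ω₂ hsp c f hf γ hγ I hI

end
end
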